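/- arXiv:math/0501345 — 5 statements merged into one kernel-verified Lean document; each statement's English description precedes it below -/
import Mathlib

section
/- Let ω = (ω₁, …, ωₙ) be a ℚ-vector space basis of ℚⁿ and let F ⊂ ℚⁿ be a finite set of nonzero vectors such that 0 ≺_ω v for every v ∈ F. Then there exists a rational δ > 0 such that for every rational ε with 0 < ε < δ and every v ∈ F one has ⟨ω_ε, v⟩ > 0. -/
/-- Dot product of two vectors in `ℚⁿ`. -/
def dotp {n : ℕ} (u v : Fin n → ℚ) : ℚ := ∑ i, u i * v i

/-- The rational group order `≺_ω` associated to a family `ω`: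
`u ≺_ω v` iff `(⟨ω₁,u⟩, …, ⟨ωₙ,u⟩)` is lexicographically smaller than
`(⟨ω₁,v⟩, …, ⟨ωₙ,v⟩)`. -/
def precW {n : ℕ} (ω : Fin n → Fin n → ℚ) (u v : Fin n → ℚ) : Prop :=
  ∃ i : Fin n, (∀ j : Fin n, j < i → dotp (ω j) u = dotp (ω j) v) ∧
    dotp (ω i) u < dotp (ω i) v

/-- The perturbed vector `ω_ε = ω₁ + ε·ω₂ + ⋯ + ε^(n-1)·ωₙ`. -/
def pert {n : ℕ} (ω : Fin n → Fin n → ℚ) (ε : ℚ) : Fin n → ℚ :=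
  fun j => ∑ i : Fin n, ε ^ (i : ℕ) * ω i j

lemma pert_dot {n : ℕ} (ω : Fin n → Fin n → ℚ) (ε : ℚ) (v : Fin n → ℚ) :
    dotp (pert ω ε) v = ∑ i : Fin n, ε ^ (i : ℕ) * dotp (ω i) v := by
  simp only [dotp, pert, Finset.sum_mul, Finset.mul_sum]
  rw [Finset.sum_comm]
  congr 1; ext i; congr 1; ext k; ring

lemma key {n : ℕ} (c : Fin n → ℚ) (i : Fin n)
    (h0 : ∀ j, j < i → c j = 0) (hi : 0 < c i) :
    ∃ δ : ℚ, 0 < δ ∧ ∀ ε : ℚ, 0 < ε → ε < δ → 0 < ∑ j : Fin n, ε ^ (j : ℕ) * c j := by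
  set S : ℚ := ∑ j : Fin n, |c j| with hS
  have hS0 : 0 ≤ S := Finset.sum_nonneg fun j _ => abs_nonneg _
  refine ⟨min 1 (c i / (1 + S)), lt_min one_pos (by positivity), fun ε hε hεδ => ?_⟩
  have hε1 : ε ≤ 1 := le_of_lt (lt_of_lt_of_le hεδ (min_le_left _ _))
  have hεc : ε * (1 + S) < c i := by
    have := lt_of_lt_of_le hεδ (min_le_right _ _)
    have h1S : (0:ℚ) < 1 + S := by linarith
    calc ε * (1+S) < c i / (1+S) * (1+S) := by exact mul_lt_mul_of_pos_right this h1S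
    _ = c i := by field_simp
  have hsplit : ∑ j : Fin n, ε ^ (j : ℕ) * c j
      = (∑ j ∈ Finset.Iio i, ε ^ (j : ℕ) * c j) + ε ^ (i:ℕ) * c i
        + ∑ j ∈ Finset.Ioi i, ε ^ (j : ℕ) * c j := by
    have huniv : (Finset.univ : Finset (Fin n)) = Finset.Iio i ∪ Finset.Ici i := by
      ext j; simp [lt_or_ge]
    rw [huniv, Finset.sum_union (by simp [Finset.disjoint_left]),
      ← Finset.Ioi_insert, Finset.sum_insert (by simp)]
    ring
  have hz : (∑ j ∈ Finset.Iio i, ε ^ (j : ℕ) * c j) = 0 :=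
    Finset.sum_eq_zero fun j hj => by
      rw [h0 j (Finset.mem_Iio.mp hj), mul_zero]
  have htail : |∑ j ∈ Finset.Ioi i, ε ^ (j : ℕ) * c j| ≤ ε ^ ((i:ℕ)+1) * S := by
    calc |∑ j ∈ Finset.Ioi i, ε ^ (j : ℕ) * c j|
        ≤ ∑ j ∈ Finset.Ioi i, |ε ^ (j : ℕ) * c j| := Finset.abs_sum_le_sum_abs _ _
      _ ≤ ∑ j ∈ Finset.Ioi i, ε ^ ((i:ℕ)+1) * |c j| := by
          refine Finset.sum_le_sum fun j hj => ?_
          rw [abs_mul, abs_pow, abs_of_pos hε]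
          have : (i:ℕ)+1 ≤ (j:ℕ) := Finset.mem_Ioi.mp hj
          exact mul_le_mul_of_nonneg_right
            (pow_le_pow_of_le_one hε.le hε1 this) (abs_nonneg _)
      _ = ε ^ ((i:ℕ)+1) * ∑ j ∈ Finset.Ioi i, |c j| := by rw [Finset.mul_sum]
      _ ≤ ε ^ ((i:ℕ)+1) * S := by
          refine mul_le_mul_of_nonneg_left ?_ (by positivity)
          exact Finset.sum_le_sum_of_subset_of_nonneg (Finset.subset_univ _)
            (fun j _ _ => abs_nonneg _)
  rw [hsplit, hz, zero_add]
  have h1 : -(ε ^ ((i:ℕ)+1) * S) ≤ ∑ j ∈ Finset.Ioi i, ε ^ (j : ℕ) * c j :=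
    neg_le_of_abs_le htail
  have hpow : (0:ℚ) < ε ^ (i:ℕ) := pow_pos hε _
  have : ε ^ ((i:ℕ)+1) * S = ε ^ (i:ℕ) * (ε * S) := by ring
  nlinarith [mul_lt_mul_of_pos_left hεc hpow]

lemma finset_delta {α : Type*} (F : Finset α) (P : ℚ → α → Prop)
    (h : ∀ v ∈ F, ∃ δ : ℚ, 0 < δ ∧ ∀ ε : ℚ, 0 < ε → ε < δ → P ε v) :
    ∃ δ : ℚ, 0 < δ ∧ ∀ ε : ℚ, 0 < ε → ε < δ → ∀ v ∈ F, P ε v := by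
  classical
  induction F using Finset.induction with
  | empty => exact ⟨1, one_pos, by simp⟩
  | @insert a s hx ih =>
    obtain ⟨δ₁, hδ₁, h₁⟩ := h a (Finset.mem_insert_self a s)
    obtain ⟨δ₂, hδ₂, h₂⟩ := ih fun v hv => h v (Finset.mem_insert_of_mem hv)
    refine ⟨min δ₁ δ₂, lt_min hδ₁ hδ₂, fun ε hε hεδ v hv => ?_⟩
    rcases Finset.mem_insert.mp hv with rfl | hv
    · exact h₁ ε hε (lt_of_lt_of_le hεδ (min_le_left _ _))
    · exact h₂ ε hε (lt_of_lt_of_le hεδ (min_le_right _ _)) v hv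

theorem stmt0 {n : ℕ} (ω : Fin n → Fin n → ℚ)
    (hind : LinearIndependent ℚ ω)
    (hspan : Submodule.span ℚ (Set.range ω) = ⊤)
    (F : Finset (Fin n → ℚ))
    (hF0 : ∀ v ∈ F, v ≠ 0)
    (hF : ∀ v ∈ F, precW ω 0 v) :
    ∃ δ : ℚ, 0 < δ ∧ ∀ ε : ℚ, 0 < ε → ε < δ → ∀ v ∈ F, 0 < dotp (pert ω ε) v := by
  refine finset_delta F (fun ε v => 0 < dotp (pert ω ε) v) fun v hv => ?_
  obtain ⟨i, h0, hi⟩ := hF v hv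
  have hz : ∀ j : Fin n, dotp (ω j) (0 : Fin n → ℚ) = 0 := fun j => by
    simp [dotp]
  obtain ⟨δ, hδ, hδ'⟩ := key (fun j => dotp (ω j) v) i
    (fun j hj => by show dotp (ω j) v = 0; rw [← h0 j hj, hz]) (by rwa [hz i] at hi)
  exact ⟨δ, hδ, fun ε hε hεδ => by show 0 < dotp (pert ω ε) v; rw [pert_dot]; exact hδ' ε hε hεδ⟩
end

section
/- Let ω = (ω₁, …, ωₙ) be a ℚ-vector space basis of ℚⁿ with 0 ≺_ω eᵢ for every standard basis vector eᵢ, and let F ⊂ ℚⁿ be a finite set of vectors with 0 ≺_ω v for every v ∈ F. Then there exists a rational δ > 0 such that for every rational ε with 0 < ε < δ, the real vector obtained from ω_ε by coordinatewise coercion lies in the topological interior of the cone C = {x ∈ ℝⁿ : xᵢ ≥ 0 for all i, and ∑ⱼ xⱼ·vⱼ ≥ 0 for all v ∈ F}. -/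
lemma dotp_zero {n : ℕ} (u : Fin n → ℚ) : dotp u 0 = 0 := by simp [dotp]

lemma dotp_single {n : ℕ} (u : Fin n → ℚ) (i : Fin n) : dotp u (Pi.single i 1) = u i := by
  simp [dotp, Pi.single_apply]

lemma dotp_pert {n : ℕ} (ω : Fin n → Fin n → ℚ) (ε : ℚ) (v : Fin n → ℚ) :
    dotp (pert ω ε) v = ∑ k : Fin n, ε ^ (k : ℕ) * dotp (ω k) v := by
  simp only [dotp, pert, Finset.sum_mul, Finset.mul_sum]
  rw [Finset.sum_comm]
  exact Finset.sum_congr rfl fun k _ => Finset.sum_congr rfl fun j _ => by ring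

lemma poly_pos {n : ℕ} (a : Fin n → ℚ) (i : Fin n)
    (h0 : ∀ j, j < i → a j = 0) (hi : 0 < a i) :
    ∃ δ : ℚ, 0 < δ ∧ ∀ ε : ℚ, 0 < ε → ε < δ → 0 < ∑ k : Fin n, ε ^ (k : ℕ) * a k := by
  set M : ℚ := ∑ k, |a k| with hM
  have hM0 : 0 ≤ M := Finset.sum_nonneg fun k _ => abs_nonneg _
  refine ⟨min 1 (a i / (M + 1)), lt_min one_pos (div_pos hi (by linarith)), ?_⟩
  intro ε hε hεδ
  have hε1 : ε < 1 := lt_of_lt_of_le hεδ (min_le_left _ _)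
  have hεM : ε * (M + 1) < a i := by
    have h := lt_of_lt_of_le hεδ (min_le_right _ _)
    rwa [lt_div_iff₀ (by linarith : (0:ℚ) < M + 1)] at h
  have hsplit : ∑ k : Fin n, ε ^ (k : ℕ) * a k
      = ε ^ (i : ℕ) * a i + ∑ k ∈ Finset.univ.erase i, ε ^ (k : ℕ) * a k :=
    (Finset.add_sum_erase _ _ (Finset.mem_univ i)).symm
  have htail : ∀ k ∈ Finset.univ.erase i,
      -(ε ^ ((i : ℕ) + 1) * |a k|) ≤ ε ^ (k : ℕ) * a k := by
    intro k hk
    rcases lt_or_gt_of_ne (Finset.ne_of_mem_erase hk) with h | h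
    · rw [h0 k h, mul_zero]
      exact neg_nonpos.mpr (by positivity)
    · have hk1 : (i : ℕ) + 1 ≤ (k : ℕ) := h
      calc -(ε ^ ((i : ℕ) + 1) * |a k|) ≤ -(ε ^ (k : ℕ) * |a k|) := by
            apply neg_le_neg
            exact mul_le_mul_of_nonneg_right
              (pow_le_pow_of_le_one hε.le hε1.le hk1) (abs_nonneg _)
        _ ≤ ε ^ (k : ℕ) * a k := by
            rw [← mul_neg]
            exact mul_le_mul_of_nonneg_left (neg_abs_le _) (by positivity)
  have hsum : ∑ k ∈ Finset.univ.erase i, -(ε ^ ((i : ℕ) + 1) * |a k|)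
      ≤ ∑ k ∈ Finset.univ.erase i, ε ^ (k : ℕ) * a k := Finset.sum_le_sum htail
  have hMe : ∑ k ∈ Finset.univ.erase i, |a k| ≤ M :=
    Finset.sum_le_sum_of_subset_of_nonneg (Finset.erase_subset _ _)
      (fun k _ _ => abs_nonneg _)
  have heq : ∑ k ∈ Finset.univ.erase i, -(ε ^ ((i : ℕ) + 1) * |a k|)
      = -(ε ^ ((i : ℕ) + 1) * ∑ k ∈ Finset.univ.erase i, |a k|) := by
    rw [Finset.mul_sum, Finset.sum_neg_distrib]
  have hbound : -(ε ^ ((i : ℕ) + 1) * M)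
      ≤ ∑ k ∈ Finset.univ.erase i, ε ^ (k : ℕ) * a k := by
    refine le_trans ?_ hsum
    rw [heq]
    have : (0:ℚ) ≤ ε ^ ((i : ℕ) + 1) := by positivity
    nlinarith
  have hp : (0:ℚ) < ε ^ (i : ℕ) := by positivity
  have hpow : ε ^ ((i : ℕ) + 1) = ε ^ (i : ℕ) * ε := by ring
  rw [hsplit]
  rw [hpow] at hbound
  nlinarith

lemma pert_pos {n : ℕ} (ω : Fin n → Fin n → ℚ) (v : Fin n → ℚ) (h : precW ω 0 v) :
    ∃ δ : ℚ, 0 < δ ∧ ∀ ε : ℚ, 0 < ε → ε < δ → 0 < dotp (pert ω ε) v := by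
  obtain ⟨i, hj, hi⟩ := h
  obtain ⟨δ, hδ, hδ'⟩ := poly_pos (fun k => dotp (ω k) v) i
    (fun j hji => (hj j hji).symm.trans (dotp_zero _))
    (by rw [← dotp_zero (ω i)]; exact hi)
  exact ⟨δ, hδ, fun ε hε hεδ => by rw [dotp_pert]; exact hδ' ε hε hεδ⟩

lemma finset_delta_s5 {n : ℕ} (ω : Fin n → Fin n → ℚ) (G : Finset (Fin n → ℚ))
    (hG : ∀ v ∈ G, precW ω 0 v) :
    ∃ δ : ℚ, 0 < δ ∧ ∀ ε : ℚ, 0 < ε → ε < δ → ∀ v ∈ G, 0 < dotp (pert ω ε) v := by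
  induction G using Finset.induction with
  | empty => exact ⟨1, one_pos, by simp⟩
  | @insert v s hv ih =>
    obtain ⟨δ₁, hδ₁, h₁⟩ := pert_pos ω v (hG v (Finset.mem_insert_self _ _))
    obtain ⟨δ₂, hδ₂, h₂⟩ := ih fun w hw => hG w (Finset.mem_insert_of_mem hw)
    refine ⟨min δ₁ δ₂, lt_min hδ₁ hδ₂, fun ε hε hεδ w hw => ?_⟩
    rcases Finset.mem_insert.mp hw with rfl | hw
    · exact h₁ ε hε (lt_of_lt_of_le hεδ (min_le_left _ _))
    · exact h₂ ε hε (lt_of_lt_of_le hεδ (min_le_right _ _)) w hw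

theorem stmt5 {n : ℕ} (ω : Fin n → Fin n → ℚ)
    (hind : LinearIndependent ℚ ω)
    (hspan : Submodule.span ℚ (Set.range ω) = ⊤)
    (hterm : ∀ i : Fin n, precW ω 0 (Pi.single i 1))
    (F : Finset (Fin n → ℚ))
    (hF : ∀ v ∈ F, precW ω 0 v)
    (C : Set (Fin n → ℝ))
    (hC : C = {x : Fin n → ℝ |
      (∀ i, 0 ≤ x i) ∧ ∀ v ∈ F, 0 ≤ ∑ j, x j * (v j : ℝ)}) :
    ∃ δ : ℚ, 0 < δ ∧ ∀ ε : ℚ, 0 < ε → ε < δ →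
      (fun i => ((pert ω ε) i : ℝ)) ∈ interior C := by
  set G : Finset (Fin n → ℚ) :=
    F ∪ Finset.image (fun i => Pi.single i 1) Finset.univ with hGdef
  have hGall : ∀ v ∈ G, precW ω 0 v := by
    intro v hv
    rcases Finset.mem_union.mp hv with h | h
    · exact hF v h
    · obtain ⟨i, _, rfl⟩ := Finset.mem_image.mp h
      exact hterm i
  obtain ⟨δ, hδ, hδ'⟩ := finset_delta_s5 ω G hGall
  refine ⟨δ, hδ, fun ε hε hεδ => ?_⟩
  have hpos : ∀ v ∈ G, 0 < dotp (pert ω ε) v := hδ' ε hε hεδ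
  set U : Set (Fin n → ℝ) :=
    {x | (∀ i, 0 < x i) ∧ ∀ v ∈ F, 0 < ∑ j, x j * (v j : ℝ)} with hUdef
  have hUopen : IsOpen U := by
    have hU : U = (⋂ i, {x : Fin n → ℝ | 0 < x i}) ∩
        ⋂ v ∈ F, {x : Fin n → ℝ | 0 < ∑ j, x j * (v j : ℝ)} := by
      ext x
      simp [hUdef, Set.mem_iInter]
    rw [hU]
    refine IsOpen.inter
      (isOpen_iInter_of_finite fun i => isOpen_lt continuous_const (continuous_apply i))
      (isOpen_biInter_finset fun v _ => isOpen_lt continuous_const ?_)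
    exact continuous_finset_sum _ fun j _ => (continuous_apply j).mul continuous_const
  have hUC : U ⊆ C := by
    rw [hC]
    exact fun x hx => ⟨fun i => (hx.1 i).le, fun v hv => (hx.2 v hv).le⟩
  have hxU : (fun i => ((pert ω ε) i : ℝ)) ∈ U := by
    constructor
    · intro i
      have h := hpos (Pi.single i 1)
        (Finset.mem_union_right _ (Finset.mem_image_of_mem _ (Finset.mem_univ i)))
      rw [dotp_single] at h
      show (0:ℝ) < ((pert ω ε i : ℚ) : ℝ)
      exact_mod_cast h
    · intro v hv
      have h := hpos v (Finset.mem_union_left _ hv)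
      have h' : (0 : ℝ) < (dotp (pert ω ε) v : ℝ) := by exact_mod_cast h
      have heq : ((dotp (pert ω ε) v : ℚ) : ℝ) = ∑ j, ((pert ω ε) j : ℝ) * (v j : ℝ) := by
        push_cast [dotp]
        rfl
      rwa [heq] at h'
  exact interior_maximal hUC hUopen hxU
end

section
/- Let ω = (ω₁, …, ωₙ) and τ = (τ₁, …, τₙ) be ℚ-vector space bases of ℚⁿ, defining the rational group orders ≺₁ = ≺_ω and ≺₂ = ≺_τ. Let D ⊂ ℚⁿ be a finite set and let δ > 0 be a rational number such that for all u', v' ∈ M_τ := {⟨τᵢ,u⟩·v : i = 1, …, n; u, v ∈ D} one has u' ≺₁ v' ⟺ ⟨ω_δ, u'⟩ < ⟨ω_δ, v'⟩. Then for all u, v ∈ D: ⟨ω_δ,v⟩·u ≺₂ ⟨ω_δ,u⟩·v holds if and only if there exists an index i such that ⟨τⱼ,u⟩·v = ⟨τⱼ,v⟩·u for all j < i and ⟨τᵢ,u⟩·v ≺₁ ⟨τᵢ,v⟩·u. -/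
lemma dotp_smul_right {n : ℕ} (u v : Fin n → ℚ) (c : ℚ) :
    dotp u (c • v) = c * dotp u v := by
  simp only [dotp, Pi.smul_apply, smul_eq_mul, Finset.mul_sum]
  exact Finset.sum_congr rfl fun i _ => by ring

lemma eq_of_forall_dot {n : ℕ} (ω : Fin n → Fin n → ℚ)
    (hωspan : Submodule.span ℚ (Set.range ω) = ⊤) (x y : Fin n → ℚ)
    (h : ∀ j, dotp (ω j) x = dotp (ω j) y) : x = y := by
  let L : (Fin n → ℚ) →ₗ[ℚ] ℚ :=
    { toFun := fun w => dotp w x - dotp w y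
      map_add' := by
        intro a b
        simp [dotp, add_mul, Finset.sum_add_distrib]; ring
      map_smul' := by
        intro c a
        simp only [dotp, Pi.smul_apply, smul_eq_mul, Finset.mul_sum, RingHom.id_apply,
          smul_sub, mul_sub]
        congr 1 <;> exact Finset.sum_congr rfl fun i _ => by ring }
  have hker : Set.range ω ⊆ (LinearMap.ker L : Set _) := by
    rintro _ ⟨j, rfl⟩
    simp [L, h j]
  have htop : (⊤ : Submodule ℚ (Fin n → ℚ)) ≤ LinearMap.ker L := by
    rw [← hωspan]
    exact Submodule.span_le.2 hker
  have hz : L (x - y) = 0 := htop (Submodule.mem_top)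
  have hsub : dotp (x - y) x - dotp (x - y) y = 0 := hz
  have hdd : dotp (x - y) (x - y) = 0 := by
    simp only [dotp, Pi.sub_apply] at hsub ⊢
    rw [← Finset.sum_sub_distrib] at hsub
    rw [← hsub]
    refine Finset.sum_congr rfl fun i _ => ?_
    ring
  have : ∀ i : Fin n, (x - y) i * (x - y) i = 0 := by
    intro i
    have hnn : ∀ i ∈ Finset.univ, 0 ≤ (x - y) i * (x - y) i := fun i _ => mul_self_nonneg _
    exact (Finset.sum_eq_zero_iff_of_nonneg hnn).1 hdd i (Finset.mem_univ i)
  funext i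
  have := mul_self_eq_zero.1 (this i)
  have : x i - y i = 0 := by simpa using this
  linarith

lemma trichot {n : ℕ} (ω : Fin n → Fin n → ℚ) (x y : Fin n → ℚ) :
    (∀ j, dotp (ω j) x = dotp (ω j) y) ∨ precW ω x y ∨ precW ω y x := by
  by_cases h : ∀ j, dotp (ω j) x = dotp (ω j) y
  · exact Or.inl h
  push_neg at h
  obtain ⟨j0, hj0⟩ := h
  classical
  set S := Finset.univ.filter (fun j => dotp (ω j) x ≠ dotp (ω j) y) with hS
  have hSne : S.Nonempty := ⟨j0, by simp [hS, hj0]⟩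
  set i := S.min' hSne with hi
  have hine : dotp (ω i) x ≠ dotp (ω i) y := by
    have := S.min'_mem hSne
    simpa [hS] using this
  have hlt : ∀ j, j < i → dotp (ω j) x = dotp (ω j) y := by
    intro j hj
    by_contra hne
    exact absurd (S.min'_le j (by simp [hS, hne])) (not_le.2 hj)
  rcases lt_or_gt_of_ne hine with h' | h'
  · exact Or.inr (Or.inl ⟨i, hlt, h'⟩)
  · exact Or.inr (Or.inr ⟨i, fun j hj => (hlt j hj).symm, h'⟩)

theorem stmt7 {n : ℕ} (ω τ : Fin n → Fin n → ℚ)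
    (hωind : LinearIndependent ℚ ω)
    (hωspan : Submodule.span ℚ (Set.range ω) = ⊤)
    (hτind : LinearIndependent ℚ τ)
    (hτspan : Submodule.span ℚ (Set.range τ) = ⊤)
    (D : Finset (Fin n → ℚ)) (δ : ℚ) (hδ : 0 < δ)
    (hδM : ∀ u' ∈ {w : Fin n → ℚ | ∃ i : Fin n, ∃ u ∈ D, ∃ v ∈ D, w = dotp (τ i) u • v},
           ∀ v' ∈ {w : Fin n → ℚ | ∃ i : Fin n, ∃ u ∈ D, ∃ v ∈ D, w = dotp (τ i) u • v},
           (precW ω u' v' ↔ dotp (pert ω δ) u' < dotp (pert ω δ) v')) :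
    ∀ u ∈ D, ∀ v ∈ D,
      (precW τ (dotp (pert ω δ) v • u) (dotp (pert ω δ) u • v) ↔
        ∃ i : Fin n, (∀ j : Fin n, j < i → dotp (τ j) u • v = dotp (τ j) v • u) ∧
          precW ω (dotp (τ i) u • v) (dotp (τ i) v • u)) := by
  intro u hu v hv
  set M : Set (Fin n → ℚ) :=
    {w : Fin n → ℚ | ∃ i : Fin n, ∃ u ∈ D, ∃ v ∈ D, w = dotp (τ i) u • v} with hM
  have hmem : ∀ (j : Fin n), ∀ w ∈ D, ∀ w' ∈ D, (dotp (τ j) w • w') ∈ M :=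
    fun j w hw w' hw' => ⟨j, w, hw, w', hw', rfl⟩
  have h1 : ∀ j : Fin n, dotp (τ j) (dotp (pert ω δ) v • u)
      = dotp (pert ω δ) (dotp (τ j) u • v) := by
    intro j; rw [dotp_smul_right, dotp_smul_right, mul_comm]
  have h2 : ∀ j : Fin n, dotp (τ j) (dotp (pert ω δ) u • v)
      = dotp (pert ω δ) (dotp (τ j) v • u) := by
    intro j; rw [dotp_smul_right, dotp_smul_right, mul_comm]
  have hltiff : ∀ j : Fin n,
      (dotp (τ j) (dotp (pert ω δ) v • u) < dotp (τ j) (dotp (pert ω δ) u • v)) ↔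
        precW ω (dotp (τ j) u • v) (dotp (τ j) v • u) := by
    intro j
    rw [h1 j, h2 j]
    exact (hδM _ (hmem j u hu v hv) _ (hmem j v hv u hu)).symm
  have heqiff : ∀ j : Fin n,
      (dotp (τ j) (dotp (pert ω δ) v • u) = dotp (τ j) (dotp (pert ω δ) u • v)) ↔
        (dotp (τ j) u • v = dotp (τ j) v • u) := by
    intro j
    rw [h1 j, h2 j]
    constructor
    · intro h
      rcases trichot ω (dotp (τ j) u • v) (dotp (τ j) v • u) with hcase | hcase | hcase
      · exact eq_of_forall_dot ω hωspan _ _ hcase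
      · have := (hδM _ (hmem j u hu v hv) _ (hmem j v hv u hu)).1 hcase
        exact absurd this (by rw [h]; exact lt_irrefl _)
      · have := (hδM _ (hmem j v hv u hu) _ (hmem j u hu v hv)).1 hcase
        exact absurd this (by rw [h]; exact lt_irrefl _)
    · intro h; rw [h]
  constructor
  · rintro ⟨i, hlo, hst⟩
    exact ⟨i, fun j hj => (heqiff j).1 (hlo j hj), (hltiff i).1 hst⟩
  · rintro ⟨i, hlo, hst⟩
    exact ⟨i, fun j hj => (heqiff j).2 (hlo j hj), (hltiff i).2 hst⟩
end

section
/- Let ω = (ω₁, …, ωₙ) and τ = (τ₁, …, τₙ) be ℚ-vector space bases of ℚⁿ, defining the rational group orders ≺₁ = ≺_ω and ≺₂ = ≺_τ. Let D ⊂ ℚⁿ be a finite set. Let δ > 0 be rational such that for all u', v' ∈ M_τ := {⟨τᵢ,u⟩·v : i = 1, …, n; u, v ∈ D} one has u' ≺₁ v' ⟺ ⟨ω_δ, u'⟩ < ⟨ω_δ, v'⟩, and let ε > 0 be rational such that for all u', v' ∈ N_δ := {⟨ω_δ,u⟩·v : u, v ∈ D} one has u' ≺₂ v' ⟺ ⟨τ_ε,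 u'⟩ < ⟨τ_ε, v'⟩. Suppose u, v ∈ D satisfy ⟨ω_δ,u⟩ > 0, ⟨ω_δ,v⟩ > 0, ⟨τ_ε,u⟩ < 0 and ⟨τ_ε,v⟩ < 0, and define t_u = ⟨ω_δ,u⟩/(⟨ω_δ,u⟩ − ⟨τ_ε,u⟩) and t_v = ⟨ω_δ,v⟩/(⟨ω_δ,v⟩ − ⟨τ_ε,v⟩). Then t_u < t_v if and only if there exists an index i such that ⟨τⱼ,u⟩·v = ⟨τⱼ,v⟩·u for all j < i and ⟨τᵢ,u⟩·v ≺₁ ⟨τᵢ,v⟩·u. In particular the comparison t_u < t_v does not depend on the choice of δ and ε. -/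
lemma dotp_smul {n : ℕ} (w : Fin n → ℚ) (c : ℚ) (u : Fin n → ℚ) :
    dotp w (c • u) = c * dotp w u := by
  simp [dotp, Finset.mul_sum, mul_left_comm]

lemma dotp_sub_left {n : ℕ} (a b z : Fin n → ℚ) :
    dotp a z - dotp b z = dotp (a - b) z := by
  simp [dotp, ← Finset.sum_sub_distrib, sub_mul]

lemma dotp_comm {n : ℕ} (a b : Fin n → ℚ) : dotp a b = dotp b a := by
  simp [dotp, mul_comm]

lemma eq_of_dotp_eq {n : ℕ} (ω : Fin n → Fin n → ℚ)
    (hspan : Submodule.span ℚ (Set.range ω) = ⊤) (X Y : Fin n → ℚ)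
    (h : ∀ i, dotp (ω i) X = dotp (ω i) Y) : X = Y := by
  have h0 : ∀ x : Fin n → ℚ, dotp x X = dotp x Y := by
    intro x
    have hx : x ∈ Submodule.span ℚ (Set.range ω) := by rw [hspan]; trivial
    induction hx using Submodule.span_induction with
    | mem z hz => obtain ⟨i, rfl⟩ := hz; exact h i
    | zero => simp [dotp]
    | add a b _ _ ha hb =>
        have : ∀ z : Fin n → ℚ, dotp (a + b) z = dotp a z + dotp b z := by
          intro z; simp [dotp, ← Finset.sum_add_distrib, add_mul]
        rw [this, this, ha, hb]
    | smul c a _ ha =>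
        have : ∀ z : Fin n → ℚ, dotp (c • a) z = c * dotp a z := by
          intro z; simp [dotp, Finset.mul_sum, mul_assoc]
        rw [this, this, ha]
  have hz : dotp (X - Y) (X - Y) = 0 := by
    rw [← dotp_sub_left]
    have h1 : dotp X (X - Y) = dotp Y (X - Y) := by
      rw [dotp_comm X, dotp_comm Y]; exact h0 (X - Y)
    linarith
  have hsq : ∀ i : Fin n, (X - Y) i * (X - Y) i = 0 := by
    intro i
    have := (Finset.sum_eq_zero_iff_of_nonneg
      (fun j _ => mul_self_nonneg ((X - Y) j))).mp hz i (Finset.mem_univ i)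
    exact this
  funext i
  have := mul_self_eq_zero.mp (hsq i)
  have hXY : X i - Y i = 0 := this
  linarith

lemma precW_total {n : ℕ} (ω : Fin n → Fin n → ℚ)
    (hspan : Submodule.span ℚ (Set.range ω) = ⊤) (X Y : Fin n → ℚ) (hne : X ≠ Y) :
    precW ω X Y ∨ precW ω Y X := by
  classical
  have hex : ∃ i, dotp (ω i) X ≠ dotp (ω i) Y := by
    by_contra h; push_neg at h; exact hne (eq_of_dotp_eq ω hspan X Y h)
  set S : Finset (Fin n) := Finset.univ.filter (fun i => dotp (ω i) X ≠ dotp (ω i) Y) with hSdef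
  have hS : S.Nonempty := by
    obtain ⟨i, hi⟩ := hex
    exact ⟨i, by simp [hSdef, hi]⟩
  set i := S.min' hS with hidef
  have hi : dotp (ω i) X ≠ dotp (ω i) Y := by
    have := S.min'_mem hS
    simpa [hSdef] using this
  have hj : ∀ j : Fin n, j < i → dotp (ω j) X = dotp (ω j) Y := by
    intro j hji
    by_contra hc
    exact absurd (S.min'_le j (by simp [hSdef, hc])) (not_le.mpr hji)
  rcases lt_or_gt_of_ne hi with h | h
  · exact Or.inl ⟨i, hj, h⟩
  · exact Or.inr ⟨i, fun j hji => (hj j hji).symm, h⟩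

theorem stmt8 {n : ℕ} (ω τ : Fin n → Fin n → ℚ)
    (hωind : LinearIndependent ℚ ω)
    (hωspan : Submodule.span ℚ (Set.range ω) = ⊤)
    (hτind : LinearIndependent ℚ τ)
    (hτspan : Submodule.span ℚ (Set.range τ) = ⊤)
    (D : Finset (Fin n → ℚ)) (δ ε : ℚ) (hδ : 0 < δ) (hε : 0 < ε)
    (hδM : ∀ u' ∈ {w : Fin n → ℚ | ∃ i : Fin n, ∃ u ∈ D, ∃ v ∈ D, w = dotp (τ i) u • v},
           ∀ v' ∈ {w : Fin n → ℚ | ∃ i : Fin n, ∃ u ∈ D, ∃ v ∈ D, w = dotp (τ i) u • v},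
           (precW ω u' v' ↔ dotp (pert ω δ) u' < dotp (pert ω δ) v'))
    (hεN : ∀ u' ∈ {w : Fin n → ℚ | ∃ u ∈ D, ∃ v ∈ D, w = dotp (pert ω δ) u • v},
           ∀ v' ∈ {w : Fin n → ℚ | ∃ u ∈ D, ∃ v ∈ D, w = dotp (pert ω δ) u • v},
           (precW τ u' v' ↔ dotp (pert τ ε) u' < dotp (pert τ ε) v'))
    (u v : Fin n → ℚ) (hu : u ∈ D) (hv : v ∈ D)
    (hωu : 0 < dotp (pert ω δ) u) (hωv : 0 < dotp (pert ω δ) v)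
    (hτu : dotp (pert τ ε) u < 0) (hτv : dotp (pert τ ε) v < 0)
    (tu tv : ℚ)
    (htu : tu = dotp (pert ω δ) u / (dotp (pert ω δ) u - dotp (pert τ ε) u))
    (htv : tv = dotp (pert ω δ) v / (dotp (pert ω δ) v - dotp (pert τ ε) v)) :
    tu < tv ↔
      ∃ i : Fin n, (∀ j : Fin n, j < i → dotp (τ j) u • v = dotp (τ j) v • u) ∧
        precW ω (dotp (τ i) u • v) (dotp (τ i) v • u) := by
  classical
  set A := dotp (pert ω δ) u with hA
  set B := dotp (pert ω δ) v with hB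
  set C := dotp (pert τ ε) u with hC
  set Dv := dotp (pert τ ε) v with hDv
  have h1 : tu < tv ↔ B * C < A * Dv := by
    rw [htu, htv, div_lt_div_iff₀ (by linarith) (by linarith)]
    constructor <;> intro h <;> nlinarith
  have hmemBu : (B • u) ∈ {w : Fin n → ℚ | ∃ u' ∈ D, ∃ v' ∈ D, w = dotp (pert ω δ) u' • v'} :=
    ⟨v, hv, u, hu, rfl⟩
  have hmemAv : (A • v) ∈ {w : Fin n → ℚ | ∃ u' ∈ D, ∃ v' ∈ D, w = dotp (pert ω δ) u' • v'} :=
    ⟨u, hu, v, hv, rfl⟩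
  have h2 : B * C < A * Dv ↔ precW τ (B • u) (A • v) := by
    rw [hεN _ hmemBu _ hmemAv, dotp_smul, dotp_smul]
  have hmemM : ∀ (j : Fin n) (a b : Fin n → ℚ), a ∈ D → b ∈ D →
      (dotp (τ j) a • b) ∈ {w : Fin n → ℚ | ∃ i : Fin n, ∃ u' ∈ D, ∃ v' ∈ D, w = dotp (τ i) u' • v'} :=
    fun j a b ha hb => ⟨j, a, ha, b, hb, rfl⟩
  have keyLt : ∀ j : Fin n, (dotp (τ j) (B • u) < dotp (τ j) (A • v) ↔
      precW ω (dotp (τ j) u • v) (dotp (τ j) v • u)) := by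
    intro j
    rw [hδM _ (hmemM j u v hu hv) _ (hmemM j v u hv hu), dotp_smul, dotp_smul,
      dotp_smul, dotp_smul, ← hA, ← hB]
    constructor <;> intro h <;> nlinarith
  have keyEq : ∀ j : Fin n, (dotp (τ j) (B • u) = dotp (τ j) (A • v) ↔
      dotp (τ j) u • v = dotp (τ j) v • u) := by
    intro j
    rw [dotp_smul, dotp_smul]
    constructor
    · intro h
      by_contra hne
      rcases precW_total ω hωspan _ _ hne with hlt | hlt
      · rw [hδM _ (hmemM j u v hu hv) _ (hmemM j v u hv hu), dotp_smul, dotp_smul,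
          ← hA, ← hB] at hlt
        nlinarith
      · rw [hδM _ (hmemM j v u hv hu) _ (hmemM j u v hu hv), dotp_smul, dotp_smul,
          ← hA, ← hB] at hlt
        nlinarith
    · intro h
      have := congrArg (dotp (pert ω δ)) h
      rw [dotp_smul, dotp_smul, ← hA, ← hB] at this
      nlinarith [this]
  rw [h1, h2]
  constructor
  · rintro ⟨i, hji, hii⟩
    exact ⟨i, fun j hj => (keyEq j).mp (hji j hj), (keyLt i).mp hii⟩
  · rintro ⟨i, hji, hii⟩
    exact ⟨i, fun j hj => (keyEq j).mpr (hji j hj), (keyLt i).mpr hii⟩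
end

section
/- Let ω = (ω₁, …, ωₙ) be a ℚ-vector space basis of ℚⁿ with 0 ≺_ω eᵢ for every standard basis vector eᵢ, and let F ⊂ ℚⁿ be a finite set of vectors with 0 ≺_ω v for every v ∈ F. Then the cone C = {x ∈ ℝⁿ : xᵢ ≥ 0 for all i, and ∑ⱼ xⱼ·vⱼ ≥ 0 for all v ∈ F} has dimension n; that is, the ℝ-linear span of C is all of ℝⁿ. -/
lemma key_lemma {n : ℕ} (ω : Fin n → Fin n → ℚ) (v : Fin n → ℚ)
    (h : precW ω 0 v) :
    ∀ᶠ ε in nhdsWithin (0:ℝ) (Set.Ioi 0),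
      0 < ∑ j : Fin n, ε ^ (j:ℕ) * ((dotp (ω j) v : ℚ) : ℝ) := by
  obtain ⟨i, h1, h2⟩ := h
  set a : Fin n → ℝ := fun j => ((dotp (ω j) v : ℚ) : ℝ) with ha
  have ha0 : ∀ j, j < i → a j = 0 := by
    intro j hj
    have := h1 j hj
    simp only [ha]
    rw [← this]
    simp [dotp]
  have hai : 0 < a i := by
    simp only [ha]
    have : dotp (ω i) 0 = 0 := by simp [dotp]
    rw [this] at h2
    exact_mod_cast h2
  set h : ℝ → ℝ := fun ε => ∑ j : Fin n, ε ^ ((j:ℕ) - (i:ℕ)) * a j with hh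
  have hcont : Continuous h :=
    continuous_finset_sum _ fun j _ => (continuous_pow _).mul continuous_const
  have h0 : h 0 = a i := by
    simp only [hh]
    rw [Finset.sum_eq_single i]
    · simp
    · intro j _ hj
      rcases lt_or_gt_of_ne hj with hlt | hgt
      · rw [ha0 j hlt, mul_zero]
      · rw [zero_pow, zero_mul]
        have : (i:ℕ) < (j:ℕ) := hgt
        omega
    · intro hmem; exact absurd (Finset.mem_univ i) hmem
  have hpos : ∀ᶠ ε in nhds (0:ℝ), 0 < h ε := by
    have := (isOpen_lt continuous_const hcont).mem_nhds (by
      show (0:ℝ) ∈ {ε | 0 < h ε}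
      simp only [Set.mem_setOf_eq, h0]; exact hai)
    filter_upwards [this] with ε hε using hε
  filter_upwards [eventually_nhdsWithin_of_eventually_nhds hpos, self_mem_nhdsWithin]
    with ε hhε (hε : 0 < ε)
  have heq : ∑ j : Fin n, ε ^ (j:ℕ) * a j = ε ^ (i:ℕ) * h ε := by
    simp only [hh]
    rw [Finset.mul_sum]
    refine Finset.sum_congr rfl fun j _ => ?_
    rcases lt_or_ge j i with hlt | hle
    · rw [ha0 j hlt]; ring
    · rw [← mul_assoc, ← pow_add]
      congr 2
      have : (i:ℕ) ≤ (j:ℕ) := hle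
      omega
  rw [show (∑ j : Fin n, ε ^ (j:ℕ) * ((dotp (ω j) v : ℚ) : ℝ)) = ∑ j : Fin n, ε ^ (j:ℕ) * a j from rfl, heq]
  exact mul_pos (pow_pos hε _) hhε

theorem stmt13 {n : ℕ} (ω : Fin n → Fin n → ℚ)
    (hind : LinearIndependent ℚ ω)
    (hspan : Submodule.span ℚ (Set.range ω) = ⊤)
    (hterm : ∀ i : Fin n, precW ω 0 (Pi.single i 1))
    (F : Finset (Fin n → ℚ))
    (hF : ∀ v ∈ F, precW ω 0 v)
    (C : Set (Fin n → ℝ))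
    (hC : C = {x : Fin n → ℝ |
      (∀ i, 0 ≤ x i) ∧ ∀ v ∈ F, 0 ≤ ∑ j, x j * (v j : ℝ)}) :
    Submodule.span ℝ C = ⊤ := by
  have hdot_single : ∀ (u : Fin n → ℚ) (i : Fin n), dotp u (Pi.single i 1) = u i := by
    intro u i
    simp [dotp, Pi.single_apply, mul_ite, Finset.sum_ite_eq']
  have hev : ∀ᶠ ε in nhdsWithin (0:ℝ) (Set.Ioi 0),
      (∀ i : Fin n, 0 < ∑ j : Fin n, ε ^ (j:ℕ) * ((ω j i : ℚ) : ℝ)) ∧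
      ∀ v ∈ F, 0 < ∑ j : Fin n, ε ^ (j:ℕ) * ((dotp (ω j) v : ℚ) : ℝ) := by
    refine Filter.Eventually.and ?_ ?_
    · rw [Filter.eventually_all]
      intro i
      have := key_lemma ω (Pi.single i 1) (hterm i)
      simpa only [hdot_single] using this
    · rw [Filter.eventually_all_finset]
      exact fun v hv => key_lemma ω v (hF v hv)
  obtain ⟨ε, hε1, hε2⟩ := hev.exists
  set x : Fin n → ℝ := fun k => ∑ j : Fin n, ε ^ (j:ℕ) * ((ω j k : ℚ) : ℝ) with hx
  have hxpos : ∀ i, 0 < x i := hε1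
  have hxv : ∀ v ∈ F, 0 < ∑ k : Fin n, x k * ((v k : ℚ) : ℝ) := by
    intro v hv
    have heq : ∑ k : Fin n, x k * ((v k : ℚ) : ℝ)
        = ∑ j : Fin n, ε ^ (j:ℕ) * ((dotp (ω j) v : ℚ) : ℝ) := by
      simp only [hx, Finset.sum_mul, dotp]
      push_cast
      rw [Finset.sum_comm]
      refine Finset.sum_congr rfl fun j _ => ?_
      rw [Finset.mul_sum]
      exact Finset.sum_congr rfl fun k _ => by ring
    rw [heq]
    exact hε2 v hv
  set U : Set (Fin n → ℝ) := {y | (∀ i, 0 < y i) ∧ ∀ v ∈ F, 0 < ∑ j, y j * (v j : ℝ)} with hU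
  have hUopen : IsOpen U := by
    rw [hU, Set.setOf_and]
    refine IsOpen.inter ?_ ?_
    · rw [Set.setOf_forall]
      exact isOpen_iInter_of_finite fun i =>
        isOpen_lt continuous_const (continuous_apply i)
    · have : {y : Fin n → ℝ | ∀ v ∈ F, 0 < ∑ j, y j * (v j : ℝ)}
          = ⋂ v ∈ F, {y : Fin n → ℝ | 0 < ∑ j, y j * (v j : ℝ)} := by
        ext y; simp
      rw [this]
      exact isOpen_biInter_finset fun v _ =>
        isOpen_lt continuous_const
          (continuous_finset_sum _ fun j _ => (continuous_apply j).mul continuous_const)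
  have hxU : x ∈ U := ⟨hxpos, hxv⟩
  have hsub : U ⊆ C := by
    rintro y ⟨h1, h2⟩
    rw [hC]
    exact ⟨fun i => (h1 i).le, fun v hv => (h2 v hv).le⟩
  have hint : x ∈ interior C := mem_interior.2 ⟨U, hsub, hUopen, hxU⟩
  have hint2 : (interior ((Submodule.span ℝ C : Submodule ℝ (Fin n → ℝ)) : Set (Fin n → ℝ))).Nonempty :=
    ⟨x, interior_mono Submodule.subset_span hint⟩
  exact Submodule.eq_top_of_nonempty_interior' _ hint2
end
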